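/- Let a, b ∈ ℝ with a < b, let ψ : [a,b] → [0,∞) be continuously differentiable, and let φ : [a,b] → ℝ be twice continuously differentiable such that exp(i·φ(a)) = i (equivalently φ(a) ∈ π/2 + 2πℤ), φ'(x) ≥ 0, φ''(x) ≥ 0 and ψ'(x) ≤ 0 for all x ∈ [a,b]. Then ∫_a^b cos(φ(x)) · ψ(x) dx ≤ 0. -/

import Mathlib

/-!
If `φ' > 0`, then `H = (sin ∘ φ - 1) · ψ / φ'` is an upper primitive of `cos (φ x) · ψ x`:
`H' = cos φ · ψ + (sin φ - 1) ψ' / φ' + (1 - sin φ) ψ φ'' / φ'²` and the last two terms are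
nonnegative. Hence the integral is at most `H b - H a = H b ≤ 0`, since `sin (φ a) = 1`.
When only `φ' ≥ 0`, apply this to `φ + ε (x - a)`, which keeps `sin (φ a) = 1` and `φ'' ≥ 0`,
and let `ε → 0⁺`: the integral is continuous in `ε` by dominated convergence.
-/

open Real Set Filter Topology

theorem sin_eq_one_of_exp_I_mul_eq_I {θ : ℝ} (h : Complex.exp (Complex.I * θ) = Complex.I) :
    sin θ = 1 := by
  rw [mul_comm] at h
  simpa [Complex.exp_ofReal_mul_I_im] using congrArg Complex.im h

theorem hasDerivAt_sin_sub_one_mul_div {φ φ' ψ : ℝ → ℝ} {x ψ'x φ''x : ℝ}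
    (hφ : HasDerivAt φ (φ' x) x) (hφ' : HasDerivAt φ' φ''x x) (hψ : HasDerivAt ψ ψ'x x)
    (hφ'x : φ' x ≠ 0) :
    HasDerivAt (fun y => (sin (φ y) - 1) * ψ y / φ' y)
      (cos (φ x) * ψ x + (sin (φ x) - 1) * ψ'x / φ' x
        + (1 - sin (φ x)) * ψ x * φ''x / φ' x ^ 2) x :=
  (((hφ.sin.sub_const 1).fun_mul hψ).fun_div hφ' hφ'x).congr_deriv (by field_simp; ring)

theorem integral_cos_mul_nonpos_of_deriv_pos {a b : ℝ} (hab : a ≤ b) {ψ ψ' φ φ' φ'' : ℝ → ℝ}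
    (hψ_nonneg : ∀ x ∈ Icc a b, 0 ≤ ψ x)
    (hψ_deriv : ∀ x ∈ Icc a b, HasDerivAt ψ (ψ' x) x)
    (hφ_deriv : ∀ x ∈ Icc a b, HasDerivAt φ (φ' x) x)
    (hφ'_deriv : ∀ x ∈ Icc a b, HasDerivAt φ' (φ'' x) x)
    (hφa : sin (φ a) = 1)
    (hφ'_pos : ∀ x ∈ Icc a b, 0 < φ' x)
    (hφ''_nonneg : ∀ x ∈ Icc a b, 0 ≤ φ'' x)
    (hψ'_nonpos : ∀ x ∈ Icc a b, ψ' x ≤ 0) :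
    ∫ x in a..b, cos (φ x) * ψ x ≤ 0 := by
  set H : ℝ → ℝ := fun y => (sin (φ y) - 1) * ψ y / φ' y
  have hH := fun x (hx : x ∈ Icc a b) => hasDerivAt_sin_sub_one_mul_div (hφ_deriv x hx)
    (hφ'_deriv x hx) (hψ_deriv x hx) (hφ'_pos x hx).ne'
  have hintegrand : ContinuousOn (fun x => cos (φ x) * ψ x) (Icc a b) :=
    (continuous_cos.comp_continuousOn (HasDerivAt.continuousOn hφ_deriv)).mul
      (HasDerivAt.continuousOn hψ_deriv)
  have hle_deriv : ∀ x ∈ Icc a b, cos (φ x) * ψ x ≤ cos (φ x) * ψ x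
      + (sin (φ x) - 1) * ψ' x / φ' x + (1 - sin (φ x)) * ψ x * φ'' x / φ' x ^ 2 := by
    intro x hx
    have hsin_le : 0 ≤ 1 - sin (φ x) := by linarith [sin_le_one (φ x)]
    have hψ'_term : 0 ≤ (sin (φ x) - 1) * ψ' x / φ' x :=
      div_nonneg (mul_nonneg_of_nonpos_of_nonpos (by linarith) (hψ'_nonpos x hx))
        (hφ'_pos x hx).le
    have hφ''_term : 0 ≤ (1 - sin (φ x)) * ψ x * φ'' x / φ' x ^ 2 :=
      div_nonneg (mul_nonneg (mul_nonneg hsin_le (hψ_nonneg x hx)) (hφ''_nonneg x hx)) (sq_nonneg _)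
    linarith
  have hb : b ∈ Icc a b := right_mem_Icc.mpr hab
  have hHb : H b ≤ 0 :=
    div_nonpos_of_nonpos_of_nonneg
      (mul_nonpos_of_nonpos_of_nonneg (by linarith [sin_le_one (φ b)]) (hψ_nonneg b hb))
      (hφ'_pos b hb).le
  calc ∫ x in a..b, cos (φ x) * ψ x ≤ H b - H a :=
        intervalIntegral.integral_le_sub_of_hasDeriv_right_of_le hab
          (HasDerivAt.continuousOn hH)
          (fun x hx => (hH x (Ioo_subset_Icc_self hx)).hasDerivWithinAt)
          hintegrand.integrableOn_Icc (fun x hx => hle_deriv x (Ioo_subset_Icc_self hx))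
    _ ≤ 0 := by simpa [H, hφa] using hHb

theorem continuous_integral_cos_add_mul_mul {a b : ℝ} {φ g ψ : ℝ → ℝ}
    (hφ : ContinuousOn φ (uIcc a b)) (hg : ContinuousOn g (uIcc a b))
    (hψ : ContinuousOn ψ (uIcc a b)) :
    Continuous fun ε : ℝ => ∫ x in a..b, cos (φ x + ε * g x) * ψ x := by
  refine intervalIntegral.continuous_of_dominated_interval (bound := fun x => |ψ x|)
    (fun ε => ?_) (fun ε => Eventually.of_forall fun x _ => ?_) hψ.intervalIntegrable.abs
    (Eventually.of_forall fun x _ => by fun_prop)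
  · exact (((continuous_cos.comp_continuousOn (hφ.add (continuousOn_const.mul hg))).mul
      hψ).mono uIoc_subset_uIcc).aestronglyMeasurable measurableSet_uIoc
  · rw [norm_mul, norm_eq_abs, norm_eq_abs]
    exact mul_le_of_le_one_left (abs_nonneg _) (abs_cos_le_one _)

theorem integral_cos_mul_nonpos
    (a b : ℝ) (hab : a < b)
    (ψ ψ' φ φ' φ'' : ℝ → ℝ)
    (hψ_nonneg : ∀ x ∈ Set.Icc a b, 0 ≤ ψ x)
    (hψ_deriv : ∀ x ∈ Set.Icc a b, HasDerivAt ψ (ψ' x) x)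
    (hφ_deriv : ∀ x ∈ Set.Icc a b, HasDerivAt φ (φ' x) x)
    (hφ'_deriv : ∀ x ∈ Set.Icc a b, HasDerivAt φ' (φ'' x) x)
    (hφa : Complex.exp (Complex.I * (φ a : ℂ)) = Complex.I)
    (hφ'_nonneg : ∀ x ∈ Set.Icc a b, 0 ≤ φ' x)
    (hφ''_nonneg : ∀ x ∈ Set.Icc a b, 0 ≤ φ'' x)
    (hψ'_nonpos : ∀ x ∈ Set.Icc a b, ψ' x ≤ 0) :
    ∫ x in a..b, Real.cos (φ x) * ψ x ≤ 0 := by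
  have hperturbed : ∀ ε > 0, ∫ x in a..b, cos (φ x + ε * (x - a)) * ψ x ≤ 0 := fun ε hε =>
    integral_cos_mul_nonpos_of_deriv_pos hab.le hψ_nonneg hψ_deriv
      (fun x hx => ((hφ_deriv x hx).add (((hasDerivAt_id x).sub_const a).const_mul ε)).congr_deriv
        (by simp))
      (fun x hx => (hφ'_deriv x hx).add_const ε) (by simpa using sin_eq_one_of_exp_I_mul_eq_I hφa)
      (fun x hx => by linarith [hφ'_nonneg x hx]) hφ''_nonneg hψ'_nonpos
  have hcont : Continuous fun ε : ℝ => ∫ x in a..b, cos (φ x + ε * (x - a)) * ψ x := by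
    rw [← uIcc_of_le hab.le] at hφ_deriv hψ_deriv
    exact continuous_integral_cos_add_mul_mul (HasDerivAt.continuousOn hφ_deriv) (by fun_prop)
      (HasDerivAt.continuousOn hψ_deriv)
  simpa using le_of_tendsto ((hcont.tendsto 0).mono_left nhdsWithin_le_nhds)
    (eventually_nhdsWithin_of_forall (s := Ioi 0) hperturbed)
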